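/- (Noisy recovery under RIP.) There exist constants C₀, C₁ > 0, depending only on δ_{2k}, with the following property. Let Φ be an n × N real matrix satisfying the Restricted Isometry Property of order 2k with constant δ_{2k} < √2 − 1, let x ∈ ℝ^N, and let y = Φx + z where ‖z‖₂ ≤ ε. Then any solution x* of the problem min ‖w‖₁ subject to ‖y − Φw‖₂ ≤ ε satisfies ‖x* − x‖₂ ≤ C₀ k^{−1/2} ‖x − x_{(k)}‖₁ + C₁ ε, where x_{(k)} is obtained from x by setting all but the k largest-in-magnitude entries to zero. -/

import Mathlib

open Matrix

/-- The ℓ¹ norm on `ℝ^N`. -/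
noncomputable def l1norm {N : ℕ} (x : Fin N → ℝ) : ℝ := ∑ i, |x i|

/-- The ℓ² norm on `ℝ^N`. -/
noncomputable def l2norm {N : ℕ} (x : Fin N → ℝ) : ℝ := Real.sqrt (∑ i, x i ^ 2)

/-- A vector is `k`-sparse if it has at most `k` nonzero entries. -/
def Sparse {N : ℕ} (k : ℕ) (x : Fin N → ℝ) : Prop := {i | x i ≠ 0}.ncard ≤ k

/-- The Restricted Isometry Property of order `m` with constant `δ`. -/
def RIP {n N : ℕ} (Φ : Matrix (Fin n) (Fin N) ℝ) (m : ℕ) (δ : ℝ) : Prop :=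
  ∀ x : Fin N → ℝ, Sparse m x →
    (1 - δ) * (∑ i, x i ^ 2) ≤ ∑ i, (Φ.mulVec x) i ^ 2 ∧
    ∑ i, (Φ.mulVec x) i ^ 2 ≤ (1 + δ) * (∑ i, x i ^ 2)

/-- `xk` is obtained from `x` by setting all but the `k` largest-in-magnitude entries to zero. -/
def IsBestKTerm {N : ℕ} (k : ℕ) (x xk : Fin N → ℝ) : Prop :=
  ∃ S : Finset (Fin N), S.card = min k N ∧ (∀ i ∈ S, xk i = x i) ∧ (∀ i ∉ S, xk i = 0) ∧
    ∀ i ∈ S, ∀ j ∉ S, |x j| ≤ |x i|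

/-!
Write `h = x* - x` and let `S` carry the `k` largest entries of `x`. Minimality of `x*` puts `h`
in the cone `‖h_{Sᶜ}‖₁ ≤ ‖h_S‖₁ + 2 ‖x_{Sᶜ}‖₁`, and feasibility of `x` and `x*` gives
`‖Φ h‖₂ ≤ 2 ε`. Cut `h_{Sᶜ}` into blocks `T₁, T₂, …` of `k` entries of decreasing magnitude: every
entry on `T_{j+1}` is at most the mean of `|h|` over `T_j`, so
`∑_{j ≥ 2} ‖h_{T_j}‖₂ ≤ k^{-1/2} ‖h_{Sᶜ}‖₁ ≤ ‖h_S‖₂ + 2 k^{-1/2} ‖x_{Sᶜ}‖₁`. The lower RIP bound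
on `h_S + h_{T₁}`, together with restricted orthogonality `|⟪Φu, Φw⟫| ≤ δ ‖u‖₂ ‖w‖₂` for disjointly
supported `k`-sparse `u, w`, then gives
`(1 - (1 + √2) δ) ‖h_S + h_{T₁}‖₂ ≤ 2 √(1 + δ) ε + 2 √2 δ k^{-1/2} ‖x_{Sᶜ}‖₁`,
and `δ < √2 - 1` makes the left-hand coefficient positive.
-/

open Finset Function

variable {N : ℕ}

section Norms

lemma l2norm_eq_norm (x : Fin N → ℝ) :
    l2norm x = ‖(WithLp.toLp 2 x : EuclideanSpace ℝ (Fin N))‖ := by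
  simp [l2norm, EuclideanSpace.norm_eq]

lemma l2norm_nonneg (x : Fin N → ℝ) : 0 ≤ l2norm x := Real.sqrt_nonneg _

lemma sq_l2norm (x : Fin N → ℝ) : l2norm x ^ 2 = ∑ i, x i ^ 2 :=
  Real.sq_sqrt (sum_nonneg fun _ _ => sq_nonneg _)

lemma sq_l2norm_eq_dotProduct (x : Fin N → ℝ) : l2norm x ^ 2 = x ⬝ᵥ x := by
  simp only [sq_l2norm, dotProduct, ← sq]

lemma l2norm_eq_zero {x : Fin N → ℝ} : l2norm x = 0 ↔ x = 0 := by
  simp [l2norm_eq_norm]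

@[simp]
lemma l2norm_zero : l2norm (0 : Fin N → ℝ) = 0 := l2norm_eq_zero.2 rfl

lemma l2norm_add_le (x y : Fin N → ℝ) : l2norm (x + y) ≤ l2norm x + l2norm y := by
  simpa only [l2norm_eq_norm, WithLp.toLp_add] using norm_add_le _ _

lemma l2norm_sub_le (x y : Fin N → ℝ) : l2norm (x - y) ≤ l2norm x + l2norm y := by
  simpa only [l2norm_eq_norm, WithLp.toLp_sub] using norm_sub_le _ _

lemma l2norm_neg (x : Fin N → ℝ) : l2norm (-x) = l2norm x := by
  simp only [l2norm_eq_norm, WithLp.toLp_neg, norm_neg]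

lemma l2norm_sum_le {ι : Type*} (s : Finset ι) (f : ι → Fin N → ℝ) :
    l2norm (∑ j ∈ s, f j) ≤ ∑ j ∈ s, l2norm (f j) := by
  simpa only [l2norm_eq_norm, WithLp.toLp_sum] using norm_sum_le _ _

lemma l2norm_smul (c : ℝ) (x : Fin N → ℝ) : l2norm (c • x) = |c| * l2norm x := by
  simp only [l2norm_eq_norm, WithLp.toLp_smul, norm_smul, Real.norm_eq_abs]

lemma abs_dotProduct_le (x y : Fin N → ℝ) : |x ⬝ᵥ y| ≤ l2norm x * l2norm y := by
  simpa [l2norm_eq_norm, EuclideanSpace.inner_toLp_toLp, mul_comm] using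
    abs_real_inner_le_norm (WithLp.toLp 2 y : EuclideanSpace ℝ (Fin N)) (WithLp.toLp 2 x)

lemma sq_l2norm_add_of_disjoint {x y : Fin N → ℝ} (h : Disjoint (support x) (support y)) :
    l2norm (x + y) ^ 2 = l2norm x ^ 2 + l2norm y ^ 2 := by
  simp only [sq_l2norm, ← sum_add_distrib, Pi.add_apply]
  refine sum_congr rfl fun i _ => ?_
  by_cases hx : x i = 0
  · simp [hx]
  · simp [notMem_support.1 (Set.disjoint_left.1 h (mem_support.2 hx))]

lemma l2norm_le_l2norm_add_of_disjoint {x y : Fin N → ℝ} (h : Disjoint (support x) (support y)) :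
    l2norm x ≤ l2norm (x + y) := by
  refine le_of_pow_le_pow_left₀ two_ne_zero (l2norm_nonneg _) ?_
  rw [sq_l2norm_add_of_disjoint h]
  exact le_add_of_nonneg_right (sq_nonneg _)

lemma add_l2norm_le_sqrt_two_mul_of_disjoint {x y : Fin N → ℝ}
    (h : Disjoint (support x) (support y)) : l2norm x + l2norm y ≤ √2 * l2norm (x + y) := by
  refine le_of_pow_le_pow_left₀ two_ne_zero (by positivity [l2norm_nonneg (x + y)]) ?_
  rw [mul_pow, Real.sq_sqrt zero_le_two, sq_l2norm_add_of_disjoint h]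
  nlinarith [sq_nonneg (l2norm x - l2norm y)]

end Norms

section Sparse

variable {m p q : ℕ} {x y : Fin N → ℝ}

lemma sparse_iff_card : Sparse m x ↔ #{i | x i ≠ 0} ≤ m := by
  rw [Sparse, ← coe_filter_univ, Set.ncard_coe_finset]

lemma sparse_of_support_subset {s : Set (Fin N)} (h : support x ⊆ s) (hs : s.ncard ≤ m) :
    Sparse m x :=
  (Set.ncard_le_ncard h).trans hs

lemma Sparse.of_support_subset (hy : Sparse m y) (h : support x ⊆ support y) : Sparse m x :=
  sparse_of_support_subset h hy

lemma Sparse.smul (hx : Sparse m x) (c : ℝ) : Sparse m (c • x) :=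
  hx.of_support_subset (support_const_smul_subset c x)

lemma Sparse.add (hx : Sparse p x) (hy : Sparse q y) : Sparse (p + q) (x + y) :=
  sparse_of_support_subset (support_add x y) ((Set.ncard_union_le _ _).trans (add_le_add hx hy))

lemma Sparse.sub (hx : Sparse p x) (hy : Sparse q y) : Sparse (p + q) (x - y) :=
  sparse_of_support_subset (support_sub x y) ((Set.ncard_union_le _ _).trans (add_le_add hx hy))

lemma Sparse.l1norm_le (hx : Sparse m x) : l1norm x ≤ √m * l2norm x := by
  have hsum : l1norm x = ∑ i with x i ≠ 0, |x i| :=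
    (sum_filter_of_ne fun i _ h => abs_ne_zero.1 h).symm
  have hsq : l1norm x ^ 2 ≤ (√m * l2norm x) ^ 2 := by
    rw [mul_pow, Real.sq_sqrt m.cast_nonneg, sq_l2norm, hsum]
    calc (∑ i with x i ≠ 0, |x i|) ^ 2 ≤ #{i | x i ≠ 0} * ∑ i with x i ≠ 0, |x i| ^ 2 :=
          sq_sum_le_card_mul_sum_sq
      _ ≤ m * ∑ i, x i ^ 2 := by
          gcongr
          · exact_mod_cast sparse_iff_card.1 hx
          · simpa using sum_le_sum_of_subset_of_nonneg (filter_subset _ univ)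
              fun i _ _ => sq_nonneg (x i)
  exact le_of_pow_le_pow_left₀ two_ne_zero (by positivity [l2norm_nonneg x]) hsq

lemma Sparse.l2norm_le (hx : Sparse m x) {c : ℝ} (hc : 0 ≤ c) (hxc : ∀ i, |x i| ≤ c) :
    l2norm x ≤ √m * c := by
  have hsq : l2norm x ^ 2 ≤ (√m * c) ^ 2 := by
    rw [mul_pow, Real.sq_sqrt m.cast_nonneg, sq_l2norm,
      ← sum_filter_of_ne fun i _ h => pow_ne_zero_iff two_ne_zero |>.1 h]
    calc ∑ i with x i ≠ 0, x i ^ 2 ≤ ∑ i with x i ≠ 0, c ^ 2 :=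
          sum_le_sum fun i _ => sq_le_sq' (abs_le.1 (hxc i)).1 (abs_le.1 (hxc i)).2
      _ ≤ m * c ^ 2 := by
          rw [sum_const, nsmul_eq_mul]
          gcongr
          exact_mod_cast sparse_iff_card.1 hx
  exact le_of_pow_le_pow_left₀ two_ne_zero (by positivity) hsq

end Sparse

namespace RIP

variable {n m p q : ℕ} {δ : ℝ} {Φ : Matrix (Fin n) (Fin N) ℝ} {x u w : Fin N → ℝ}

lemma le_sq_l2norm_mulVec (hΦ : RIP Φ m δ) (hx : Sparse m x) :
    (1 - δ) * l2norm x ^ 2 ≤ l2norm (Φ *ᵥ x) ^ 2 := by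
  simpa only [sq_l2norm] using (hΦ x hx).1

lemma sq_l2norm_mulVec_le (hΦ : RIP Φ m δ) (hx : Sparse m x) :
    l2norm (Φ *ᵥ x) ^ 2 ≤ (1 + δ) * l2norm x ^ 2 := by
  simpa only [sq_l2norm] using (hΦ x hx).2

lemma l2norm_mulVec_le (hΦ : RIP Φ m δ) (hx : Sparse m x) :
    l2norm (Φ *ᵥ x) ≤ √(1 + δ) * l2norm x := by
  rw [← Real.sqrt_sq (l2norm_nonneg (Φ *ᵥ x)), ← Real.sqrt_sq (l2norm_nonneg x),
    ← Real.sqrt_mul' _ (sq_nonneg _)]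
  exact Real.sqrt_le_sqrt (hΦ.sq_l2norm_mulVec_le hx)

/-- Polarization: `4 ⟪Φu, Φw⟫ = ‖Φ(u + w)‖² - ‖Φ(u - w)‖²`, and `‖u ± w‖² = ‖u‖² + ‖w‖²` by
disjointness. -/
lemma two_mul_abs_dotProduct_mulVec_le (hΦ : RIP Φ (p + q) δ) (hu : Sparse p u)
    (hw : Sparse q w) (huw : Disjoint (support u) (support w)) :
    2 * |(Φ *ᵥ u) ⬝ᵥ (Φ *ᵥ w)| ≤ δ * (l2norm u ^ 2 + l2norm w ^ 2) := by
  have hadd := sq_l2norm_add_of_disjoint huw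
  have hsub : l2norm (u - w) ^ 2 = l2norm u ^ 2 + l2norm w ^ 2 := by
    rw [sub_eq_add_neg, sq_l2norm_add_of_disjoint (by rwa [support_neg]), l2norm_neg]
  have hpol : l2norm (Φ *ᵥ (u + w)) ^ 2 - l2norm (Φ *ᵥ (u - w)) ^ 2
      = 4 * ((Φ *ᵥ u) ⬝ᵥ (Φ *ᵥ w)) := by
    simp only [sq_l2norm_eq_dotProduct, mulVec_add, mulVec_sub, add_dotProduct, dotProduct_add,
      sub_dotProduct, dotProduct_sub, dotProduct_comm (Φ *ᵥ w)]
    ring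
  have h₁ := hΦ.le_sq_l2norm_mulVec (hu.add hw)
  have h₂ := hΦ.sq_l2norm_mulVec_le (hu.add hw)
  have h₃ := hΦ.le_sq_l2norm_mulVec (hu.sub hw)
  have h₄ := hΦ.sq_l2norm_mulVec_le (hu.sub hw)
  rw [hadd] at h₁ h₂
  rw [hsub] at h₃ h₄
  rcases abs_cases ((Φ *ᵥ u) ⬝ᵥ (Φ *ᵥ w)) with ⟨h, -⟩ | ⟨h, -⟩ <;> rw [h] <;> linarith

/-- Restricted orthogonality: the polarization bound applied to `‖w‖ • u` and `‖u‖ • w`. -/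
lemma abs_dotProduct_mulVec_le (hΦ : RIP Φ (p + q) δ) (hu : Sparse p u) (hw : Sparse q w)
    (huw : Disjoint (support u) (support w)) :
    |(Φ *ᵥ u) ⬝ᵥ (Φ *ᵥ w)| ≤ δ * l2norm u * l2norm w := by
  have key := hΦ.two_mul_abs_dotProduct_mulVec_le (hu.smul (l2norm w)) (hw.smul (l2norm u))
    (huw.mono (support_const_smul_subset _ _) (support_const_smul_subset _ _))
  rw [mulVec_smul, mulVec_smul, smul_dotProduct, dotProduct_smul, l2norm_smul, l2norm_smul,
    abs_of_nonneg (l2norm_nonneg u), abs_of_nonneg (l2norm_nonneg w), smul_eq_mul, smul_eq_mul,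
    abs_mul, abs_mul, abs_of_nonneg (l2norm_nonneg u), abs_of_nonneg (l2norm_nonneg w)] at key
  rcases (mul_nonneg (l2norm_nonneg u) (l2norm_nonneg w)).eq_or_lt with h | h
  · rcases mul_eq_zero.1 h.symm with h | h <;> simp [l2norm_eq_zero.1 h]
  · refine le_of_mul_le_mul_left ?_ h
    nlinarith

lemma abs_dotProduct_mulVec_add_le (hΦ : RIP Φ (p + q) δ) (hδ : 0 ≤ δ) {a b t : Fin N → ℝ}
    (ha : Sparse p a) (hb : Sparse p b) (ht : Sparse q t) (hab : Disjoint (support a) (support b))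
    (hat : Disjoint (support a) (support t)) (hbt : Disjoint (support b) (support t)) :
    |(Φ *ᵥ (a + b)) ⬝ᵥ (Φ *ᵥ t)| ≤ √2 * δ * l2norm (a + b) * l2norm t := by
  calc |(Φ *ᵥ (a + b)) ⬝ᵥ (Φ *ᵥ t)|
      ≤ |(Φ *ᵥ a) ⬝ᵥ (Φ *ᵥ t)| + |(Φ *ᵥ b) ⬝ᵥ (Φ *ᵥ t)| := by
        rw [mulVec_add, add_dotProduct]
        exact abs_add_le _ _
    _ ≤ δ * l2norm a * l2norm t + δ * l2norm b * l2norm t :=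
        add_le_add (hΦ.abs_dotProduct_mulVec_le ha ht hat) (hΦ.abs_dotProduct_mulVec_le hb ht hbt)
    _ = δ * (l2norm a + l2norm b) * l2norm t := by ring
    _ ≤ δ * (√2 * l2norm (a + b)) * l2norm t := by
        gcongr
        · exact l2norm_nonneg t
        · exact add_l2norm_le_sqrt_two_mul_of_disjoint hab
    _ = √2 * δ * l2norm (a + b) * l2norm t := by ring

/-- With `h = a + b + ∑ j, t j`, write `‖Φ(a + b)‖² = ⟪Φ(a + b), Φh⟫ - ∑ j, ⟪Φ(a + b), Φ(t j)⟫`: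
Cauchy–Schwarz bounds the first term and restricted orthogonality the others. -/
lemma one_sub_mul_l2norm_le (hΦ : RIP Φ (p + p) δ) (hδ : 0 ≤ δ) {ι : Type*} {J : Finset ι}
    {a b : Fin N → ℝ} {t : ι → Fin N → ℝ} (ha : Sparse p a) (hb : Sparse p b)
    (ht : ∀ j ∈ J, Sparse p (t j)) (hab : Disjoint (support a) (support b))
    (hat : ∀ j ∈ J, Disjoint (support a) (support (t j)))
    (hbt : ∀ j ∈ J, Disjoint (support b) (support (t j))) :
    (1 - δ) * l2norm (a + b) ≤
      √(1 + δ) * l2norm (Φ *ᵥ (a + b + ∑ j ∈ J, t j)) + √2 * δ * ∑ j ∈ J, l2norm (t j) := by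
  set X := l2norm (a + b)
  set y := Φ *ᵥ (a + b)
  have hexp : l2norm y ^ 2 = y ⬝ᵥ (Φ *ᵥ (a + b + ∑ j ∈ J, t j)) - ∑ j ∈ J, y ⬝ᵥ (Φ *ᵥ t j) := by
    rw [sq_l2norm_eq_dotProduct, mulVec_add, mulVec_sum, dotProduct_add, dotProduct_sum]
    ring
  have hhead : y ⬝ᵥ (Φ *ᵥ (a + b + ∑ j ∈ J, t j)) ≤
      X * (√(1 + δ) * l2norm (Φ *ᵥ (a + b + ∑ j ∈ J, t j))) :=
    calc _ ≤ l2norm y * l2norm (Φ *ᵥ (a + b + ∑ j ∈ J, t j)) :=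
          (le_abs_self _).trans (abs_dotProduct_le _ _)
      _ ≤ √(1 + δ) * X * l2norm (Φ *ᵥ (a + b + ∑ j ∈ J, t j)) := by
          gcongr
          · exact l2norm_nonneg _
          · exact hΦ.l2norm_mulVec_le (ha.add hb)
      _ = _ := by ring
  have htail : -∑ j ∈ J, y ⬝ᵥ (Φ *ᵥ t j) ≤ X * (√2 * δ * ∑ j ∈ J, l2norm (t j)) := by
    rw [← sum_neg_distrib, mul_sum, mul_sum]
    refine sum_le_sum fun j hj => ?_
    have := hΦ.abs_dotProduct_mulVec_add_le hδ ha hb (ht j hj) hab (hat j hj) (hbt j hj)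
    linarith [neg_le_abs (y ⬝ᵥ (Φ *ᵥ t j))]
  have hlow : (1 - δ) * X ^ 2 ≤ l2norm y ^ 2 := hΦ.le_sq_l2norm_mulVec (ha.add hb)
  rcases (show 0 ≤ X from l2norm_nonneg _).eq_or_lt with hX | hX
  · rw [← hX, mul_zero]
    have := sum_nonneg fun j (_ : j ∈ J) => l2norm_nonneg (t j)
    positivity [l2norm_nonneg (Φ *ᵥ (a + b + ∑ j ∈ J, t j))]
  · refine le_of_mul_le_mul_right ?_ hX
    nlinarith

end RIP

/-- Pointwise, `|x + h| ≥ |x| - |h|` on `s` and `|x + h| ≥ |h| - |x|` off `s`. -/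
lemma l1norm_indicator_compl_le {x h : Fin N → ℝ} (s : Set (Fin N))
    (hmin : l1norm (x + h) ≤ l1norm x) :
    l1norm (sᶜ.indicator h) ≤ l1norm (s.indicator h) + 2 * l1norm (sᶜ.indicator x) := by
  have key : ∀ i, |x i| + 2 * |sᶜ.indicator h i| ≤
      |x i + h i| + |s.indicator h i| + |sᶜ.indicator h i| + 2 * |sᶜ.indicator x i| := by
    intro i
    have h₁ : |x i| ≤ |x i + h i| + |h i| := by simpa using abs_sub (x i + h i) (h i)
    have h₂ : |h i| ≤ |x i + h i| + |x i| := by simpa using abs_sub (x i + h i) (x i)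
    by_cases hi : i ∈ s
    · rw [Set.indicator_of_mem hi, Set.indicator_of_notMem (not_not_intro hi),
        Set.indicator_of_notMem (not_not_intro hi), abs_zero]
      linarith
    · rw [Set.indicator_of_notMem hi, Set.indicator_of_mem (Set.mem_compl hi),
        Set.indicator_of_mem (Set.mem_compl hi), abs_zero]
      linarith
  have := sum_le_sum fun i (_ : i ∈ univ) => key i
  simp only [sum_add_distrib, ← mul_sum] at this
  simp only [l1norm, Pi.add_apply] at hmin ⊢
  linarith

section Blocks

variable {k M : ℕ} {b : Fin N → ℕ} {v : Fin N → ℝ}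

lemma sum_indicator_fiber (hb : ∀ i, b i < M) (v : Fin N → ℝ) :
    ∑ j ∈ range M, {i | b i = j}.indicator v = v := by
  ext i
  simp [Set.indicator_apply, hb i]

lemma l1norm_indicator_setOf (p : Fin N → Prop) [DecidablePred p] (v : Fin N → ℝ) :
    l1norm ({i | p i}.indicator v) = ∑ i with p i, |v i| := by
  simp [l1norm, Set.indicator_apply, apply_ite, sum_filter]

lemma sum_l1norm_indicator_fiber_le (b : Fin N → ℕ) (v : Fin N → ℝ) (M : ℕ) :
    ∑ j ∈ range M, l1norm ({i | b i = j}.indicator v) ≤ l1norm v := by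
  simp only [l1norm, Set.indicator_apply, Set.mem_ofPred_eq, apply_ite, abs_zero]
  rw [sum_comm]
  refine sum_le_sum fun i _ => ?_
  rw [sum_ite_eq]
  split_ifs <;> simp

lemma disjoint_support_indicator_compl (s t : Set (Fin N)) (f g : Fin N → ℝ) :
    Disjoint (support (s.indicator f)) (support (t.indicator (sᶜ.indicator g))) := by
  refine Disjoint.mono Set.support_indicator_subset ?_ disjoint_compl_right
  rw [Set.support_indicator]
  exact Set.inter_subset_right.trans Set.support_indicator_subset

lemma disjoint_support_indicator_fiber {j j' : ℕ} (hj : j ≠ j') (f g : Fin N → ℝ) :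
    Disjoint (support ({i | b i = j}.indicator f)) (support ({i | b i = j'}.indicator g)) :=
  Disjoint.mono Set.support_indicator_subset Set.support_indicator_subset
    (Set.disjoint_left.2 fun _ hi hi' => hj (hi.symm.trans hi'))

/-- The block `T_{j+1}` of the paper is `{i | b i = j}`. -/
structure IsSortedBlocking (k : ℕ) (v : Fin N → ℝ) (b : Fin N → ℕ) : Prop where
  lt : ∀ i, b i < N
  card_le : ∀ j, #{i | b i = j} ≤ k
  card_eq_of_succ : ∀ i j, b i = j + 1 → #{i | b i = j} = k
  abs_le_of_lt : ∀ i i', b i < b i' → |v i'| ≤ |v i|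

namespace IsSortedBlocking

lemma indicator_add_sum_indicator_succ (hb : IsSortedBlocking k v b) :
    {i | b i = 0}.indicator v + ∑ j ∈ range N, {i | b i = j + 1}.indicator v = v := by
  rw [add_comm, ← sum_range_succ' fun j => {i | b i = j}.indicator v]
  exact sum_indicator_fiber (fun i => (hb.lt i).trans N.lt_succ_self) v

lemma sparse_indicator (hb : IsSortedBlocking k v b) (j : ℕ) (w : Fin N → ℝ) :
    Sparse k ({i | b i = j}.indicator w) :=
  sparse_of_support_subset Set.support_indicator_subset
    (by rw [← coe_filter_univ, Set.ncard_coe_finset]; exact hb.card_le j)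

/-- Each entry of block `j + 1` is at most the mean magnitude over the full block `j`. -/
lemma l2norm_indicator_succ_le (hb : IsSortedBlocking k v b) (hk : 0 < k) (j : ℕ) :
    l2norm ({i | b i = j + 1}.indicator v) ≤ (√k)⁻¹ * l1norm ({i | b i = j}.indicator v) := by
  rw [l1norm_indicator_setOf]
  have hentry : ∀ i', |{i | b i = j + 1}.indicator v i'| ≤ (∑ i with b i = j, |v i|) / k := by
    intro i'
    by_cases hi' : b i' = j + 1
    · rw [Set.indicator_of_mem (show i' ∈ {i | b i = j + 1} from hi'),
        le_div_iff₀ (by exact_mod_cast hk), mul_comm, ← hb.card_eq_of_succ i' j hi', ← nsmul_eq_mul]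
      exact card_nsmul_le_sum _ _ _ fun i hi =>
        hb.abs_le_of_lt i i' (by rw [(mem_filter.1 hi).2, hi']; omega)
    · rw [Set.indicator_of_notMem (show i' ∉ {i | b i = j + 1} from hi'), abs_zero]
      positivity
  calc l2norm ({i | b i = j + 1}.indicator v) ≤ √k * ((∑ i with b i = j, |v i|) / k) :=
        (hb.sparse_indicator (j + 1) v).l2norm_le (by positivity) hentry
    _ = (√k)⁻¹ * ∑ i with b i = j, |v i| := by
        field_simp
        rw [Real.sq_sqrt k.cast_nonneg, mul_comm]

lemma sum_l2norm_indicator_succ_le (hb : IsSortedBlocking k v b) (hk : 0 < k) :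
    ∑ j ∈ range N, l2norm ({i | b i = j + 1}.indicator v) ≤ (√k)⁻¹ * l1norm v :=
  calc _ ≤ ∑ j ∈ range N, (√k)⁻¹ * l1norm ({i | b i = j}.indicator v) :=
        sum_le_sum fun j _ => hb.l2norm_indicator_succ_le hk j
    _ ≤ (√k)⁻¹ * l1norm v := by
        rw [← mul_sum]
        gcongr
        exact sum_l1norm_indicator_fiber_le b v N

end IsSortedBlocking

end Blocks

section Counting

variable {k : ℕ}

lemma card_filter_fin_div_eq_le (hk : 0 < k) (j : ℕ) : #{p : Fin N | (p : ℕ) / k = j} ≤ k :=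
  calc _ ≤ #(Ico (j * k) (j * k + k)) := by
        refine card_le_card_of_injOn Fin.val (fun p hp => ?_) Fin.val_injective.injOn
        have := (Nat.div_eq_iff hk).1 (mem_filter.1 hp).2
        simp only [coe_Ico, Set.mem_Ico]
        omega
    _ = k := by simp

lemma card_filter_fin_div_eq_of_le (hk : 0 < k) {j : ℕ} (hN : j * k + k ≤ N) :
    #{p : Fin N | (p : ℕ) / k = j} = k := by
  refine (card_filter_fin_div_eq_le hk j).antisymm ?_
  calc k = #(Ico (j * k) (j * k + k)) := by simp
    _ ≤ #(image Fin.val {p : Fin N | (p : ℕ) / k = j}) := by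
        refine card_le_card fun q hq => ?_
        have hq' := mem_Ico.1 hq
        refine mem_image.2 ⟨⟨q, by omega⟩, mem_filter.2 ⟨mem_univ _, ?_⟩, rfl⟩
        show q / k = j
        exact (Nat.div_eq_iff hk).2 (by omega)
    _ ≤ _ := card_image_le

end Counting

/-- Block `j` consists of the positions `[j k, (j + 1) k)` in the order of decreasing `|v i|`. -/
lemma exists_isSortedBlocking {k : ℕ} (hk : 0 < k) (v : Fin N → ℝ) :
    ∃ b, IsSortedBlocking k v b := by
  set σ := Tuple.sort fun i => -|v i|
  have hσ : Monotone ((fun i => -|v i|) ∘ σ) := Tuple.monotone_sort _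
  have hcard : ∀ j, #{i | (σ.symm i : ℕ) / k = j} = #{p : Fin N | (p : ℕ) / k = j} :=
    fun j => card_equiv σ.symm fun i => by simp
  refine ⟨fun i => (σ.symm i : ℕ) / k,
    ⟨fun i => ?_, fun j => ?_, fun i j hi => ?_, fun i i' h => ?_⟩⟩
  · exact (Nat.div_le_self _ _).trans_lt (σ.symm i).isLt
  · exact (hcard j).trans_le (card_filter_fin_div_eq_le hk j)
  · refine (hcard j).trans (card_filter_fin_div_eq_of_le hk ?_)
    have h₁ := ((Nat.div_eq_iff hk).1 hi).1
    have h₂ := (σ.symm i).isLt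
    rw [add_one_mul] at h₁
    omega
  · have hlt : σ.symm i ≤ σ.symm i' := by
      by_contra hcon
      exact absurd (Nat.div_le_div_right (c := k) (le_of_lt (not_le.1 hcon))) (not_le.2 h)
    simpa using hσ hlt

namespace RIP

variable {n k : ℕ} {δ : ℝ} {Φ : Matrix (Fin n) (Fin N) ℝ}

lemma one_sub_mul_l2norm_head_le (hΦ : RIP Φ (2 * k) δ) (hδ : 0 ≤ δ) {s : Set (Fin N)}
    (hs : s.ncard ≤ k) {h : Fin N → ℝ} {b : Fin N → ℕ}
    (hb : IsSortedBlocking k (sᶜ.indicator h) b) :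
    (1 - δ) * l2norm (s.indicator h + {i | b i = 0}.indicator (sᶜ.indicator h)) ≤
      √(1 + δ) * l2norm (Φ *ᵥ h) +
        √2 * δ * ∑ j ∈ range N, l2norm ({i | b i = j + 1}.indicator (sᶜ.indicator h)) := by
  have hh : s.indicator h + {i | b i = 0}.indicator (sᶜ.indicator h) +
      ∑ j ∈ range N, {i | b i = j + 1}.indicator (sᶜ.indicator h) = h := by
    rw [add_assoc, hb.indicator_add_sum_indicator_succ, Set.indicator_self_add_compl]
  have := (two_mul k ▸ hΦ).one_sub_mul_l2norm_le hδ (J := range N)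
    (t := fun j => {i | b i = j + 1}.indicator (sᶜ.indicator h))
    (sparse_of_support_subset Set.support_indicator_subset hs) (hb.sparse_indicator 0 _)
    (fun j _ => hb.sparse_indicator (j + 1) _) (disjoint_support_indicator_compl s _ h h)
    (fun j _ => disjoint_support_indicator_compl s _ h h)
    (fun j _ => disjoint_support_indicator_fiber (Nat.succ_ne_zero j).symm _ _)
  rwa [hh] at this

theorem mul_l2norm_le_of_cone (hΦ : RIP Φ (2 * k) δ) (hδ : 0 ≤ δ) (hδ₁ : (1 + √2) * δ ≤ 1)
    (hk : 0 < k) {s : Set (Fin N)} (hs : s.ncard ≤ k) {h : Fin N → ℝ} {e : ℝ}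
    (hcone : l1norm (sᶜ.indicator h) ≤ l1norm (s.indicator h) + 2 * e) :
    (1 - (1 + √2) * δ) * l2norm h ≤
      2 * (1 + (√2 - 1) * δ) * ((√k)⁻¹ * e) + 2 * √(1 + δ) * l2norm (Φ *ᵥ h) := by
  obtain ⟨b, hb⟩ := exists_isSortedBlocking hk (sᶜ.indicator h)
  have ha : Sparse k (s.indicator h) := sparse_of_support_subset Set.support_indicator_subset hs
  have hX := hΦ.one_sub_mul_l2norm_head_le hδ hs hb
  set X := l2norm (s.indicator h + {i | b i = 0}.indicator (sᶜ.indicator h))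
  set T := ∑ j ∈ range N, l2norm ({i | b i = j + 1}.indicator (sᶜ.indicator h))
  have hT : T ≤ X + 2 * ((√k)⁻¹ * e) :=
    calc T ≤ (√k)⁻¹ * l1norm (sᶜ.indicator h) := hb.sum_l2norm_indicator_succ_le hk
      _ ≤ (√k)⁻¹ * (√k * l2norm (s.indicator h) + 2 * e) :=
          mul_le_mul_of_nonneg_left (hcone.trans (add_le_add ha.l1norm_le le_rfl)) (by positivity)
      _ = l2norm (s.indicator h) + 2 * ((√k)⁻¹ * e) := by
          rw [mul_add, inv_mul_cancel_left₀ (by positivity)]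
          ring
      _ ≤ X + 2 * ((√k)⁻¹ * e) := by
          grw [l2norm_le_l2norm_add_of_disjoint (disjoint_support_indicator_compl _ _ _ _)]
  have hh : l2norm h ≤ X + T :=
    calc l2norm h = l2norm (s.indicator h + {i | b i = 0}.indicator (sᶜ.indicator h) +
          ∑ j ∈ range N, {i | b i = j + 1}.indicator (sᶜ.indicator h)) := by
          rw [add_assoc, hb.indicator_add_sum_indicator_succ, Set.indicator_self_add_compl]
      _ ≤ X + T := (l2norm_add_le _ _).trans (add_le_add le_rfl (l2norm_sum_le _ _))
  have hγ : 0 ≤ 1 - (1 + √2) * δ := sub_nonneg.2 hδ₁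
  have h₁ := mul_le_mul_of_nonneg_left hh hγ
  have h₂ := mul_le_mul_of_nonneg_left hT hγ
  have h₃ := mul_le_mul_of_nonneg_left hT (by positivity : 0 ≤ √2 * δ)
  linarith

end RIP

/-- Noisy recovery under RIP: if `δ_{2k} < √2 - 1` and `y = Φ x + z` with `‖z‖₂ ≤ ε`, any
ℓ¹-minimizer `x*` subject to `‖y - Φ w‖₂ ≤ ε` satisfies
`‖x* - x‖₂ ≤ C₀ k^{-1/2} ‖x - x_(k)‖₁ + C₁ ε`, where `C₀, C₁` depend only on `δ_{2k}`. -/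
theorem noisy_recovery_under_RIP (δ : ℝ) (hδpos : 0 < δ) (hδ : δ < Real.sqrt 2 - 1) :
    ∃ C₀ C₁ : ℝ, 0 < C₀ ∧ 0 < C₁ ∧
      ∀ (n N k : ℕ), 0 < k →
        ∀ Φ : Matrix (Fin n) (Fin N) ℝ, RIP Φ (2 * k) δ →
          ∀ (x xk xstar : Fin N → ℝ) (z : Fin n → ℝ) (ε : ℝ), IsBestKTerm k x xk →
            l2norm z ≤ ε →
            l2norm (Φ.mulVec x + z - Φ.mulVec xstar) ≤ ε →
            (∀ w : Fin N → ℝ, l2norm (Φ.mulVec x + z - Φ.mulVec w) ≤ ε →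
              l1norm xstar ≤ l1norm w) →
            l2norm (xstar - x) ≤ C₀ * (Real.sqrt k)⁻¹ * l1norm (x - xk) + C₁ * ε := by
  have hγ : 0 < 1 - (1 + √2) * δ := by nlinarith [Real.sq_sqrt zero_le_two, Real.sqrt_nonneg 2]
  have hC₀ : 0 < 1 + (√2 - 1) * δ := by nlinarith [Real.one_lt_sqrt_two]
  refine ⟨2 * (1 + (√2 - 1) * δ) / (1 - (1 + √2) * δ), 4 * √(1 + δ) / (1 - (1 + √2) * δ),
    by positivity, by positivity, ?_⟩
  rintro n N k hk Φ hΦ x xk xstar z ε ⟨S, hS, hxkS, hxkSc, -⟩ hz hfeas hmin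
  have hxk : x - xk = (↑S : Set (Fin N))ᶜ.indicator x := by
    ext i
    by_cases hi : i ∈ S <;> simp [hi, hxkS, hxkSc]
  have hcone := l1norm_indicator_compl_le (↑S) (h := xstar - x)
    (by rw [add_sub_cancel]; exact hmin x (by simpa using hz))
  have htube : l2norm (Φ *ᵥ (xstar - x)) ≤ 2 * ε := by
    rw [show Φ *ᵥ (xstar - x) = z - (Φ *ᵥ x + z - Φ *ᵥ xstar) by rw [mulVec_sub]; abel]
    linarith [l2norm_sub_le z (Φ *ᵥ x + z - Φ *ᵥ xstar)]
  have key := hΦ.mul_l2norm_le_of_cone hδpos.le (by linarith) hk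
    (by rw [Set.ncard_coe_finset, hS]; exact min_le_left k N) hcone
  rw [hxk, div_mul_eq_mul_div, div_mul_eq_mul_div, div_mul_eq_mul_div, ← add_div, le_div_iff₀ hγ]
  linarith [mul_le_mul_of_nonneg_left htube (Real.sqrt_nonneg (1 + δ))]
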